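/- arXiv:2412.00021 — 3 statements merged into one kernel-verified Lean document; each statement's English description precedes it below -/
import Mathlib

section
/- Let n, r, d be positive integers with d dividing n. If P ∈ ℤ[t] satisfies (∑_{i=0}^{n} t^i)·(∑_{i=0}^{r} t^i) = (∑_{i=0}^{n+r} t^i) + t·(∑_{i=0}^{n/d−1} t^i)·P(t) in ℤ[t], then P(t) = (∑_{i=0}^{d−1} t^{i·(n/d)})·(∑_{i=0}^{r−1} t^i). -/
open Polynomial Finset

/-- If `P ∈ ℤ[t]` satisfies
`(∑_{i=0}^{n} t^i)·(∑_{i=0}^{r} t^i) = (∑_{i=0}^{n+r} t^i) + t·(∑_{i=0}^{n/d−1} t^i)·P`,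
then `P = (∑_{i=0}^{d−1} t^{i·(n/d)})·(∑_{i=0}^{r−1} t^i)`. -/
theorem stmt_1 (n r d : ℕ) (hn : 0 < n) (hr : 0 < r) (hd : 0 < d) (hdvd : d ∣ n)
    (P : Polynomial ℤ)
    (hP : (∑ i ∈ Finset.range (n + 1), (X : Polynomial ℤ) ^ i) *
        (∑ i ∈ Finset.range (r + 1), (X : Polynomial ℤ) ^ i) =
      (∑ i ∈ Finset.range (n + r + 1), (X : Polynomial ℤ) ^ i) +
        X * (∑ i ∈ Finset.range (n / d), (X : Polynomial ℤ) ^ i) * P) :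
    P = (∑ i ∈ Finset.range d, (X : Polynomial ℤ) ^ (i * (n / d))) *
        (∑ i ∈ Finset.range r, (X : Polynomial ℤ) ^ i) := by
  set m := n / d with hm
  have hmn : d * m = n := Nat.mul_div_cancel' hdvd
  have hm0 : 0 < m := Nat.div_pos (Nat.le_of_dvd hn hdvd) hd
  have hX1 : (X - 1 : Polynomial ℤ) ≠ 0 := by
    have := X_sub_C_ne_zero (R := ℤ) 1
    simpa using this
  -- abbreviation
  set S : ℕ → Polynomial ℤ := fun k => ∑ i ∈ Finset.range k, (X : Polynomial ℤ) ^ i with hS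
  have hgeom : ∀ k, S k * (X - 1) = X ^ k - 1 := fun k => geom_sum_mul X k
  -- first factor rewritten as geometric sum in X^m
  have hQ1 : (∑ i ∈ Finset.range d, (X : Polynomial ℤ) ^ (i * m))
      = ∑ i ∈ Finset.range d, ((X : Polynomial ℤ) ^ m) ^ i := by
    refine Finset.sum_congr rfl fun i _ => ?_
    rw [← pow_mul, Nat.mul_comm]
  set Q1 : Polynomial ℤ := ∑ i ∈ Finset.range d, ((X : Polynomial ℤ) ^ m) ^ i with hQ1def
  have hQgeom : Q1 * (X ^ m - 1) = X ^ n - 1 := by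
    have := geom_sum_mul ((X : Polynomial ℤ) ^ m) d
    rw [← pow_mul, Nat.mul_comm m d, hmn] at this
    exact this
  -- S m * Q1 = S n
  have h1 : S m * Q1 = S n := by
    apply mul_right_cancel₀ hX1
    calc S m * Q1 * (X - 1) = Q1 * (S m * (X - 1)) := by ring
      _ = Q1 * (X ^ m - 1) := by rw [hgeom]
      _ = X ^ n - 1 := hQgeom
      _ = S n * (X - 1) := (hgeom n).symm
  -- key identity
  have key : S (n + 1) * S (r + 1) = S (n + r + 1) + X * S n * S r := by
    apply mul_right_cancel₀ hX1
    apply mul_right_cancel₀ hX1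
    have e1 := hgeom (n + 1)
    have e2 := hgeom (r + 1)
    have e3 := hgeom (n + r + 1)
    have e4 := hgeom n
    have e5 := hgeom r
    calc S (n + 1) * S (r + 1) * (X - 1) * (X - 1)
        = (S (n + 1) * (X - 1)) * (S (r + 1) * (X - 1)) := by ring
      _ = (X ^ (n + 1) - 1) * (X ^ (r + 1) - 1) := by rw [e1, e2]
      _ = (X ^ (n + r + 1) - 1) * (X - 1) + X * (X ^ n - 1) * (X ^ r - 1) := by ring
      _ = (S (n + r + 1) * (X - 1)) * (X - 1)
          + X * (S n * (X - 1)) * (S r * (X - 1)) := by rw [e3, e4, e5]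
      _ = (S (n + r + 1) + X * S n * S r) * (X - 1) * (X - 1) := by ring
  -- conclude
  have hSm0 : X * S m ≠ 0 := by
    apply mul_ne_zero X_ne_zero
    intro h
    have := hgeom m
    rw [h, zero_mul] at this
    have hXm : (X : Polynomial ℤ) ^ m = 1 := by linear_combination -this
    have := congrArg natDegree hXm
    simp [natDegree_X_pow] at this
    omega
  have hcancel : X * S m * P = X * S m * (Q1 * S r) := by
    have h2 : S (n + r + 1) + X * S m * P = S (n + r + 1) + X * S n * S r := by
      rw [← hP, key]
    have h3 : X * S m * P = X * S n * S r := add_left_cancel h2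
    rw [h3, ← h1]; ring
  have := mul_left_cancel₀ hSm0 hcancel
  rw [hQ1]
  exact this
end

section
/- There do not exist integers c₂, c₃, c₄, s₂, s₃, s₄, s₅ such that in ℤ[t] the product (1 + 7t + c₂t² + c₃t³ + c₄t⁴)·(1 − 7t + s₂t² + s₃t³ + s₄t⁴ + s₅t⁵ + 27t⁶ − 9t⁷ + 3t⁸ − t⁹) is congruent to 1 modulo t^{10}, i.e., has coefficient 1 in degree 0 and coefficient 0 in every degree from 1 to 9. -/
open Polynomial

set_option maxHeartbeats 2000000 in
set_option synthInstance.maxHeartbeats 1000000 in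
set_option synthInstance.maxSize 2048 in
theorem aux_mod3 : ∀ c2 c3 c4 s2 s3 s4 s5 : ZMod 3,
    s2 - 49 + c2 = 0 →
    s3 + 7*s2 - 7*c2 + c3 = 0 →
    s4 + 7*s3 + c2*s2 - 7*c3 + c4 = 0 →
    s5 + 7*s4 + c2*s3 + c3*s2 - 7*c4 = 0 →
    27 + 7*s5 + c2*s4 + c3*s3 + c4*s2 = 0 →
    180 + c2*s5 + c3*s4 + c4*s3 = 0 →
    -60 + 27*c2 + c3*s5 + c4*s4 = 0 →
    20 - 9*c2 + 27*c3 + c4*s5 = 0 →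
    c2 = 0 ∧ c3 = 1 ∧ c4 = 1 ∧ s2 = 1 ∧ s3 = 1 ∧ s4 = 2 ∧ s5 = 1 := by decide

set_option maxHeartbeats 1600000 in
/-- There are no integers `c₂, c₃, c₄, s₂, s₃, s₄, s₅` such that
`(1 + 7t + c₂t² + c₃t³ + c₄t⁴)·(1 − 7t + s₂t² + s₃t³ + s₄t⁴ + s₅t⁵ + 27t⁶ − 9t⁷ + 3t⁸ − t⁹)`
is congruent to `1` modulo `t^{10}` in `ℤ[t]`. -/
theorem stmt_8 :
    ¬ ∃ c₂ c₃ c₄ s₂ s₃ s₄ s₅ : ℤ,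
      (((1 + 7 * X + C c₂ * X ^ 2 + C c₃ * X ^ 3 + C c₄ * X ^ 4) *
          (1 - 7 * X + C s₂ * X ^ 2 + C s₃ * X ^ 3 + C s₄ * X ^ 4 + C s₅ * X ^ 5
            + 27 * X ^ 6 - 9 * X ^ 7 + 3 * X ^ 8 - X ^ 9) : Polynomial ℤ).coeff 0 = 1 ∧
        ∀ k : ℕ, 1 ≤ k → k ≤ 9 →
          ((1 + 7 * X + C c₂ * X ^ 2 + C c₃ * X ^ 3 + C c₄ * X ^ 4) *
            (1 - 7 * X + C s₂ * X ^ 2 + C s₃ * X ^ 3 + C s₄ * X ^ 4 + C s₅ * X ^ 5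
              + 27 * X ^ 6 - 9 * X ^ 7 + 3 * X ^ 8 - X ^ 9) : Polynomial ℤ).coeff k = 0) := by
  rintro ⟨c₂, c₃, c₄, s₂, s₃, s₄, s₅, -, h⟩
  have e2 := h 2 (by norm_num) (by norm_num)
  have e3 := h 3 (by norm_num) (by norm_num)
  have e4 := h 4 (by norm_num) (by norm_num)
  have e5 := h 5 (by norm_num) (by norm_num)
  have e6 := h 6 (by norm_num) (by norm_num)
  have e7 := h 7 (by norm_num) (by norm_num)
  have e8 := h 8 (by norm_num) (by norm_num)
  have e9 := h 9 (by norm_num) (by norm_num)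
  simp only [coeff_mul, Finset.Nat.sum_antidiagonal_eq_sum_range_succ_mk,
    Finset.sum_range_succ, Finset.sum_range_zero, coeff_add, coeff_sub, coeff_one,
    coeff_X_pow, coeff_C_mul, coeff_C, coeff_X] at e2 e3 e4 e5 e6 e7 e8 e9
  norm_num at e2 e3 e4 e5 e6 e7 e8 e9
  have E2 : s₂ - 49 + c₂ = 0 := by linear_combination e2
  have E3 : s₃ + 7*s₂ - 7*c₂ + c₃ = 0 := by linear_combination e3
  have E4 : s₄ + 7*s₃ + c₂*s₂ - 7*c₃ + c₄ = 0 := by linear_combination e4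
  have E5 : s₅ + 7*s₄ + c₂*s₃ + c₃*s₂ - 7*c₄ = 0 := by linear_combination e5
  have E6 : 27 + 7*s₅ + c₂*s₄ + c₃*s₃ + c₄*s₂ = 0 := by linear_combination e6
  have E7 : 180 + c₂*s₅ + c₃*s₄ + c₄*s₃ = 0 := by linear_combination e7
  have E8 : -60 + 27*c₂ + c₃*s₅ + c₄*s₄ = 0 := by linear_combination e8
  have E9 : 20 - 9*c₂ + 27*c₃ + c₄*s₅ = 0 := by linear_combination e9
  -- reduce mod 3
  have m2 := congrArg (fun x : ℤ => (x : ZMod 3)) E2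
  have m3 := congrArg (fun x : ℤ => (x : ZMod 3)) E3
  have m4 := congrArg (fun x : ℤ => (x : ZMod 3)) E4
  have m5 := congrArg (fun x : ℤ => (x : ZMod 3)) E5
  have m6 := congrArg (fun x : ℤ => (x : ZMod 3)) E6
  have m7 := congrArg (fun x : ℤ => (x : ZMod 3)) E7
  have m8 := congrArg (fun x : ℤ => (x : ZMod 3)) E8
  have m9 := congrArg (fun x : ℤ => (x : ZMod 3)) E9
  push_cast at m2 m3 m4 m5 m6 m7 m8 m9
  obtain ⟨r2, r3, r4, t2, t3, t4, t5⟩ :=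
    aux_mod3 (c₂ : ZMod 3) c₃ c₄ s₂ s₃ s₄ s₅ m2 m3 m4 m5 m6 m7 m8 m9
  -- lift: write each variable as 3*_ + residue
  obtain ⟨a2, ha2⟩ : (3:ℤ) ∣ c₂ := by
    rwa [ZMod.intCast_zmod_eq_zero_iff_dvd] at r2
  obtain ⟨a3, ha3'⟩ : (3:ℤ) ∣ (c₃ - 1) := by
    exact_mod_cast (ZMod.intCast_zmod_eq_zero_iff_dvd _ 3).mp (by push_cast; rw [r3]; ring)
  obtain ⟨a4, ha4'⟩ : (3:ℤ) ∣ (c₄ - 1) := by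
    exact_mod_cast (ZMod.intCast_zmod_eq_zero_iff_dvd _ 3).mp (by push_cast; rw [r4]; ring)
  obtain ⟨b2, hb2'⟩ : (3:ℤ) ∣ (s₂ - 1) := by
    exact_mod_cast (ZMod.intCast_zmod_eq_zero_iff_dvd _ 3).mp (by push_cast; rw [t2]; ring)
  obtain ⟨b3, hb3'⟩ : (3:ℤ) ∣ (s₃ - 1) := by
    exact_mod_cast (ZMod.intCast_zmod_eq_zero_iff_dvd _ 3).mp (by push_cast; rw [t3]; ring)
  obtain ⟨b4, hb4'⟩ : (3:ℤ) ∣ (s₄ - 2) := by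
    exact_mod_cast (ZMod.intCast_zmod_eq_zero_iff_dvd _ 3).mp (by push_cast; rw [t4]; ring)
  obtain ⟨b5, hb5'⟩ : (3:ℤ) ∣ (s₅ - 1) := by
    exact_mod_cast (ZMod.intCast_zmod_eq_zero_iff_dvd _ 3).mp (by push_cast; rw [t5]; ring)
  have ha3 : c₃ = 3*a3 + 1 := by linarith
  have ha4 : c₄ = 3*a4 + 1 := by linarith
  have hb2 : s₂ = 3*b2 + 1 := by linarith
  have hb3 : s₃ = 3*b3 + 1 := by linarith
  have hb4 : s₄ = 3*b4 + 2 := by linarith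
  have hb5 : s₅ = 3*b5 + 1 := by linarith
  subst ha2 ha3 ha4 hb2 hb3 hb4 hb5
  -- key contradiction mod 9
  have key : (303:ℤ) = 9 * (-(6*b5 + 3*b4 + a2*b3 + 5*a2 + a3*b2 + 20*a3 + b2
      + 2*a2*b4 + 2*a3*b3 + b3 + 2*a4*b2 + a2*b5 + a3*b4 + a4*b3 + a3*b5
      + a4*b4 + 2*a4*b5)) := by
    linear_combination E5 + 2*E6 + E7 + E8 + 2*E9
  have hdvd : (9:ℤ) ∣ 303 := ⟨_, key⟩
  norm_num at hdvd
end

section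
/- There do not exist polynomials Q, R ∈ ℤ[X] such that Q ≡ (X+1)^4 (mod 3), R ≡ (X+1)^5 (mod 3), and Q·R ≡ 1 − 3X⁸ − 2X⁹ (mod 9), where congruence modulo m means all coefficients of the difference are divisible by m. -/
open Polynomial

lemma dvd_eval_of_dvd_coeff (m : ℤ) (p : Polynomial ℤ) (h : ∀ k, m ∣ p.coeff k) (x : ℤ) :
    m ∣ p.eval x := by
  rw [eval_eq_sum_range]
  exact Finset.dvd_sum fun i _ => (h i).mul_right _

lemma dvd_coeff_derivative (m : ℤ) (p : Polynomial ℤ) (h : ∀ k, m ∣ p.coeff k) :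
    ∀ k, m ∣ p.derivative.coeff k := by
  intro k
  rw [coeff_derivative]
  exact (h _).mul_right _

/-- There are no `Q, R ∈ ℤ[X]` with `Q ≡ (X+1)^4 (mod 3)`, `R ≡ (X+1)^5 (mod 3)`, and
`Q·R ≡ 1 − 3X⁸ − 2X⁹ (mod 9)`, congruences being coefficientwise. -/
theorem stmt_12 :
    ¬ ∃ Q R : Polynomial ℤ,
      (∀ k : ℕ, (3 : ℤ) ∣ (Q - (X + 1) ^ 4).coeff k) ∧
      (∀ k : ℕ, (3 : ℤ) ∣ (R - (X + 1) ^ 5).coeff k) ∧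
      (∀ k : ℕ, (9 : ℤ) ∣ (Q * R - (1 - 3 * X ^ 8 - 2 * X ^ 9)).coeff k) := by
  rintro ⟨Q, R, hQ, hR, hQR⟩
  -- values at -1
  have hQv : (3 : ℤ) ∣ Q.eval (-1) := by
    have := dvd_eval_of_dvd_coeff 3 _ hQ (-1)
    simpa using this
  have hRv : (3 : ℤ) ∣ R.eval (-1) := by
    have := dvd_eval_of_dvd_coeff 3 _ hR (-1)
    simpa using this
  -- derivative values at -1
  have hQd : (3 : ℤ) ∣ Q.derivative.eval (-1) := by
    have := dvd_eval_of_dvd_coeff 3 _ (dvd_coeff_derivative 3 _ hQ) (-1)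
    simpa [derivative_pow, derivative_add] using this
  have hRd : (3 : ℤ) ∣ R.derivative.eval (-1) := by
    have := dvd_eval_of_dvd_coeff 3 _ (dvd_coeff_derivative 3 _ hR) (-1)
    simpa [derivative_pow, derivative_add] using this
  -- main divisibility
  have hmain : (9 : ℤ) ∣ (Q * R - (1 - 3 * X ^ 8 - 2 * X ^ 9)).derivative.eval (-1) :=
    dvd_eval_of_dvd_coeff 9 _ (dvd_coeff_derivative 9 _ hQR) (-1)
  have h9 : (9 : ℤ) ∣ Q.derivative.eval (-1) * R.eval (-1) + Q.eval (-1) * R.derivative.eval (-1) := by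
    have h1 : (9 : ℤ) ∣ Q.derivative.eval (-1) * R.eval (-1) := by
      obtain ⟨a, ha⟩ := hQd; obtain ⟨b, hb⟩ := hRv
      exact ⟨a * b, by rw [ha, hb]; ring⟩
    have h2 : (9 : ℤ) ∣ Q.eval (-1) * R.derivative.eval (-1) := by
      obtain ⟨a, ha⟩ := hQv; obtain ⟨b, hb⟩ := hRd
      exact ⟨a * b, by rw [ha, hb]; ring⟩
    exact dvd_add h1 h2
  have heq : (Q * R - (1 - 3 * X ^ 8 - 2 * X ^ 9)).derivative.eval (-1) =
      (Q.derivative.eval (-1) * R.eval (-1) + Q.eval (-1) * R.derivative.eval (-1)) - 6 := by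
    simp [derivative_sub, derivative_mul, derivative_pow]
  rw [heq] at hmain
  omega
end
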